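/- For 0 < σ̲ ≤ σ̄ and all real t, the G-normal upper CDF F̄(t) and lower CDF F̲(t) satisfy F̲(t) ≤ F̄(t), where F̄(t) = (2σ̄/(σ̄+σ̲)) Q(-t/σ̄) for t ≤ 0, F̄(t) = (σ̄-σ̲)/(σ̄+σ̲) + (2σ̲/(σ̄+σ̲)) Q(-t/σ̲) for t > 0, and F̲(t) = (2σ̲/(σ̄+σ̲))(1 - Q(t/σ̲)) for t ≤ 0, F̲(t) = 1 - (2σ̄/(σ̄+σ̲)) Q(t/σ̄) for t > 0. -/
import Mathlib

open MeasureTheory Set Real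

/-- The standard Gaussian tail function Q(v) = ∫_v^∞ (1/√(2π)) e^{-z²/2} dz. -/
noncomputable def gaussQ (v : ℝ) : ℝ :=
  ∫ z in Set.Ioi v, (Real.sqrt (2 * Real.pi))⁻¹ * Real.exp (-z ^ 2 / 2)

lemma gdens_int : Integrable (fun z : ℝ => (Real.sqrt (2 * Real.pi))⁻¹ * Real.exp (-z ^ 2 / 2)) := by
  have h := (integrable_exp_neg_mul_sq (by norm_num : (0:ℝ) < 1/2)).const_mul
    (Real.sqrt (2 * Real.pi))⁻¹
  convert h using 2 with z
  ring_nf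

lemma gdens_total : ∫ z : ℝ, (Real.sqrt (2 * Real.pi))⁻¹ * Real.exp (-z ^ 2 / 2) = 1 := by
  have h := integral_gaussian (1/2 : ℝ)
  have h2 : (∫ z : ℝ, Real.exp (-z ^ 2 / 2)) = Real.sqrt (2 * Real.pi) := by
    rw [show Real.sqrt (2 * Real.pi) = Real.sqrt (Real.pi / (1/2)) by norm_num [mul_comm]]
    rw [← h]
    congr 1 with z
    ring_nf
  rw [integral_const_mul, h2, inv_mul_cancel₀]
  positivity

lemma gaussQ_neg (v : ℝ) : gaussQ (-v) = 1 - gaussQ v := by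
  have hiic : (∫ z in Set.Iic v, (Real.sqrt (2 * Real.pi))⁻¹ * Real.exp (-z ^ 2 / 2))
      = gaussQ (-v) := by
    rw [← neg_neg v, ← integral_comp_neg_Ioi]
    simp only [gaussQ, neg_neg, neg_sq]
  have h := intervalIntegral.integral_Iic_add_Ioi (b := v) (μ := volume)
    gdens_int.integrableOn gdens_int.integrableOn
  rw [gdens_total, hiic] at h
  change gaussQ (-v) + gaussQ v = 1 at h
  linarith

lemma gaussQ_nonneg (v : ℝ) : 0 ≤ gaussQ v := by
  apply setIntegral_nonneg measurableSet_Ioi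
  intro x _
  positivity

lemma gaussQ_anti {v w : ℝ} (h : v ≤ w) : gaussQ w ≤ gaussQ v := by
  apply setIntegral_mono_set gdens_int.integrableOn
  · filter_upwards with x; positivity
  · exact HasSubset.Subset.eventuallyLE (Set.Ioi_subset_Ioi h)

lemma gaussQ_key (σl σu s : ℝ) (h0 : 0 < σl) (h1 : σl ≤ σu) (hs : 0 ≤ s) :
    σl * gaussQ (s / σl) ≤ σu * gaussQ (s / σu) := by
  have hu : 0 < σu := lt_of_lt_of_le h0 h1
  have hdiv : s / σu ≤ s / σl := div_le_div_of_nonneg_left hs h0 h1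
  exact mul_le_mul h1 (gaussQ_anti hdiv) (gaussQ_nonneg _) hu.le

/-- The G-normal upper CDF. -/
noncomputable def Fbar (σl σu t : ℝ) : ℝ :=
  if t ≤ 0 then (2 * σu / (σu + σl)) * gaussQ (-t / σu)
  else (σu - σl) / (σu + σl) + (2 * σl / (σu + σl)) * gaussQ (-t / σl)

/-- The G-normal lower CDF. -/
noncomputable def GFlower (σl σu t : ℝ) : ℝ :=
  if t ≤ 0 then (2 * σl / (σu + σl)) * (1 - gaussQ (t / σl))
  else 1 - (2 * σu / (σu + σl)) * gaussQ (t / σu)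

/-- The lower CDF is dominated by the upper CDF: F̲(t) ≤ F̄(t) for all t. -/
theorem stmt_7 (σl σu : ℝ) (h0 : 0 < σl) (h1 : σl ≤ σu) (t : ℝ) :
    GFlower σl σu t ≤ Fbar σl σu t := by
  have hu : 0 < σu := lt_of_lt_of_le h0 h1
  have hsum : 0 < σu + σl := by linarith
  unfold GFlower Fbar
  by_cases ht : t ≤ 0
  · simp only [ht, if_true]
    have hq : 1 - gaussQ (t / σl) = gaussQ (-t / σl) := by
      rw [neg_div, gaussQ_neg]
    rw [hq]
    have hk := gaussQ_key σl σu (-t) h0 h1 (by linarith)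
    calc 2 * σl / (σu + σl) * gaussQ (-t / σl)
        = 2 / (σu + σl) * (σl * gaussQ (-t / σl)) := by ring
      _ ≤ 2 / (σu + σl) * (σu * gaussQ (-t / σu)) := by
          apply mul_le_mul_of_nonneg_left hk; positivity
      _ = 2 * σu / (σu + σl) * gaussQ (-t / σu) := by ring
  · simp only [ht, if_false]
    push_neg at ht
    have hq : gaussQ (-t / σl) = 1 - gaussQ (t / σl) := by
      rw [neg_div, gaussQ_neg]
    rw [hq]
    have hk := gaussQ_key σl σu t h0 h1 ht.le
    have hne : σu + σl ≠ 0 := ne_of_gt hsum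
    have e1 : 1 - 2 * σu / (σu + σl) * gaussQ (t / σu)
        = (σu + σl - 2 * σu * gaussQ (t / σu)) / (σu + σl) := by
      field_simp
    have e2 : (σu - σl) / (σu + σl) + 2 * σl / (σu + σl) * (1 - gaussQ (t / σl))
        = (σu + σl - 2 * σl * gaussQ (t / σl)) / (σu + σl) := by
      field_simp; ring
    rw [e1, e2, div_le_div_iff_of_pos_right hsum]
    linarith
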